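/- arXiv:2001.06179 — 3 statements merged into one kernel-verified Lean document; each statement's English description precedes it below -/
import Mathlib

section
/- For integers m ∈ ℤ and n ∈ ℕ, the branching-Toeplitz kernels satisfy the multiplicativity identity: for all vertices σ₁, σ₂ in T_q, Σ_{τ ∈ T_q} Γ_q[e^{imθ}](σ₁, τ) · Γ_q[e^{inθ}](τ, σ₂) = Γ_q[e^{i(m+n)θ}](σ₁, σ₂), where the sum has only finitely many nonzero terms. -/
/-- Vertices of the rooted `q`-homogeneous tree, modelled as words over `Fin q`;
the root is the empty word and the children of `w` are the words `k :: w`. -/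
abbrev Vertex (q : ℕ) := List (Fin q)

/-- `σ` is an ancestor of `τ` (i.e. `σ ⪯ τ`): `τ = w ++ σ` for some word `w`. -/
def Anc {q : ℕ} (σ τ : Vertex q) : Prop := σ <:+ τ

/-- Two vertices are comparable (`(σ,τ) ∈ 𝒞`) if one is an ancestor of the other. -/
def Comp {q : ℕ} (σ τ : Vertex q) : Prop := σ <:+ τ ∨ τ <:+ σ

/-- Length of the longest common suffix, i.e. the generation of the last common
ancestor of the two vertices. -/
def lcs {q : ℕ} (σ τ : Vertex q) : ℕ :=
  ((σ.reverse.zip τ.reverse).takeWhile (fun p => decide (p.1 = p.2))).length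

/-- The graph distance on the rooted `q`-homogeneous tree. -/
def tdist {q : ℕ} (σ τ : Vertex q) : ℕ := (σ.length - lcs σ τ) + (τ.length - lcs σ τ)

instance {q : ℕ} (σ τ : Vertex q) : Decidable (Comp σ τ) :=
  inferInstanceAs (Decidable (σ <:+ τ ∨ τ <:+ σ))

/-- The branching-Toeplitz kernel `Γ_q[e^{ikθ}]` with monomial symbol:
`Γ_q[e^{ikθ}](σ₁,σ₂) = q^{-d(σ₁,σ₂)/2} · 1(|σ₁|-|σ₂| = k) · 1_𝒞(σ₁,σ₂)`. -/
noncomputable def monoKer {q : ℕ} (k : ℤ) (σ₁ σ₂ : Vertex q) : ℝ :=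
  if Comp σ₁ σ₂ ∧ (σ₁.length : ℤ) - σ₂.length = k then
    (q : ℝ) ^ (-(tdist σ₁ σ₂ : ℝ) / 2) else 0

/-! For `j : ℕ`, `monoKer j τ σ` is `q^{-j/2}` times the indicator that `τ` is one of the `q^j`
descendants of `σ` in generation `|σ| + j`, and `monoKer (-j) σ τ = monoKer j τ σ`. For `m ≥ 0` the
sum has the single term `τ = σ₁.drop m`, the ancestor of `σ₁` that is `m` generations up. For
`m = -k < 0` it counts the common `k`-descendants of `σ₁` and `n`-descendants of `σ₂`; two such sets
are nested or disjoint, so there are `q^{min k n}` terms, and `q^{-(k+n)/2} q^{min k n} = q^{-|n-k|/2}`. -/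

open Finset

section

variable {q : ℕ}

theorem lcs_of_suffix {σ τ : Vertex q} (h : σ <:+ τ) : lcs σ τ = σ.length := by
  obtain ⟨w, rfl⟩ := h
  have hzip : ∀ l r : List (Fin q), l.zip (l ++ r) = l.map fun a => (a, a) := by
    intro l r
    induction l <;> simp [*]
  rw [lcs, List.reverse_append, hzip, List.takeWhile_map, List.length_map,
    List.takeWhile_eq_self_iff.2 (by simp), List.length_reverse]

theorem lcs_comm (σ τ : Vertex q) : lcs σ τ = lcs τ σ := by
  rw [lcs, lcs, ← List.zip_swap, List.takeWhile_map, List.length_map]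
  congr 2
  funext p
  simp [eq_comm]

theorem tdist_comm (σ τ : Vertex q) : tdist σ τ = tdist τ σ := by
  rw [tdist, tdist, lcs_comm]
  omega

theorem tdist_of_suffix {σ τ : Vertex q} (h : σ <:+ τ) : tdist σ τ = τ.length - σ.length := by
  rw [tdist, lcs_of_suffix h]
  omega

theorem rpow_neg_natCast_div_two {x : ℝ} (hx : 0 ≤ x) (j : ℕ) :
    x ^ (-(j : ℝ) / 2) = (√x)⁻¹ ^ j := by
  rw [Real.sqrt_eq_rpow, inv_pow, ← Real.rpow_natCast, ← Real.rpow_mul hx, ← Real.rpow_neg hx]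
  ring_nf

def descendants (j : ℕ) (σ : Vertex q) : Finset (Vertex q) :=
  univ.image fun w : Fin j → Fin q => List.ofFn w ++ σ

theorem mem_descendants {j : ℕ} {σ τ : Vertex q} :
    τ ∈ descendants j σ ↔ σ <:+ τ ∧ τ.length = σ.length + j := by
  constructor
  · rintro hτ
    obtain ⟨w, -, rfl⟩ := mem_image.1 hτ
    simp [List.suffix_append, add_comm]
  · rintro ⟨⟨w, rfl⟩, hlen⟩
    have hw : w.length = j := by simp only [List.length_append] at hlen; omega
    subst hw
    exact mem_image.2 ⟨w.get, mem_univ _, by rw [List.ofFn_get]⟩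

theorem card_descendants (j : ℕ) (σ : Vertex q) : #(descendants j σ) = q ^ j := by
  rw [descendants, card_image_of_injective _ fun v w h => List.ofFn_injective
    (List.append_cancel_right h), card_univ, Fintype.card_fun, Fintype.card_fin, Fintype.card_fin]

theorem mem_descendants_iff_of_mem {i j : ℕ} {ρ σ τ : Vertex q} (hτ : τ ∈ descendants j σ)
    (hji : j ≤ i) : τ ∈ descendants i ρ ↔ σ ∈ descendants (i - j) ρ := by
  obtain ⟨hστ, hτσ⟩ := mem_descendants.1 hτ
  simp only [mem_descendants]
  constructor
  · rintro ⟨hρτ, hτρ⟩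
    exact ⟨List.suffix_of_suffix_length_le hρτ hστ (by omega), by omega⟩
  · rintro ⟨hρσ, hσρ⟩
    exact ⟨hρσ.trans hστ, by omega⟩

theorem descendants_inter_of_le {k n : ℕ} (hkn : k ≤ n) (σ₁ σ₂ : Vertex q) :
    descendants k σ₁ ∩ descendants n σ₂ =
      if σ₁ ∈ descendants (n - k) σ₂ then descendants k σ₁ else ∅ := by
  split_ifs with h
  · exact inter_eq_left.2 fun τ hτ => (mem_descendants_iff_of_mem hτ hkn).2 h
  · refine eq_empty_of_forall_notMem fun τ hτ => h ?_
    rw [mem_inter] at hτ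
    exact (mem_descendants_iff_of_mem hτ.1 hkn).1 hτ.2

theorem monoKer_neg (k : ℤ) (σ τ : Vertex q) : monoKer (-k) σ τ = monoKer k τ σ := by
  have hcond : (Comp σ τ ∧ (σ.length : ℤ) - τ.length = -k) ↔
      (Comp τ σ ∧ (τ.length : ℤ) - σ.length = k) := by
    rw [Comp, Comp, or_comm]
    constructor <;> rintro ⟨h, hk⟩ <;> exact ⟨h, by omega⟩
  simp only [monoKer, hcond, tdist_comm σ τ]

theorem monoKer_natCast (j : ℕ) (σ τ : Vertex q) :
    monoKer j σ τ = if σ ∈ descendants j τ then (√q)⁻¹ ^ j else 0 := by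
  have hcond : (Comp σ τ ∧ (σ.length : ℤ) - τ.length = j) ↔ σ ∈ descendants j τ := by
    rw [mem_descendants, Comp]
    constructor
    · rintro ⟨hστ | hτσ, hj⟩
      · have hle := hστ.length_le
        rw [hστ.eq_of_length (by omega)]
        exact ⟨List.suffix_refl τ, by omega⟩
      · exact ⟨hτσ, by omega⟩
    · rintro ⟨hτσ, hj⟩
      exact ⟨Or.inr hτσ, by omega⟩
  simp only [monoKer, hcond]
  split_ifs with h
  · rw [tdist_comm, tdist_of_suffix (mem_descendants.1 h).1, (mem_descendants.1 h).2,
      Nat.add_sub_cancel_left, rpow_neg_natCast_div_two (Nat.cast_nonneg q)]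
  · rfl

theorem monoKer_neg_natCast (j : ℕ) (σ τ : Vertex q) :
    monoKer (-j) σ τ = if τ ∈ descendants j σ then (√q)⁻¹ ^ j else 0 := by
  rw [monoKer_neg, monoKer_natCast]

theorem finsum_monoKer_natCast_mul (k n : ℕ) (σ₁ σ₂ : Vertex q) :
    ∑ᶠ τ, monoKer k σ₁ τ * monoKer n τ σ₂ = monoKer ((k : ℤ) + n) σ₁ σ₂ := by
  rw [finsum_eq_single _ (σ₁.drop k), ← Nat.cast_add]
  · simp only [monoKer_natCast]
    by_cases hk : k ≤ σ₁.length
    · have hmem : σ₁ ∈ descendants k (σ₁.drop k) :=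
        mem_descendants.2 ⟨List.drop_suffix _ _, by simp only [List.length_drop]; omega⟩
      simp only [if_pos hmem, mem_descendants_iff_of_mem hmem (k.le_add_right n),
        Nat.add_sub_cancel_left]
      split_ifs <;> ring
    · have h1 : σ₁ ∉ descendants k (σ₁.drop k) := fun h =>
        hk (by simp only [mem_descendants, List.length_drop] at h; omega)
      have h2 : σ₁ ∉ descendants (k + n) σ₂ := fun h =>
        hk (by simp only [mem_descendants] at h; omega)
      rw [if_neg h1, if_neg h2, zero_mul]
  · intro τ hτ
    rw [monoKer_natCast, if_neg, zero_mul]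
    intro h
    obtain ⟨hτσ, hlen⟩ := mem_descendants.1 h
    exact hτ (by rw [List.suffix_iff_eq_drop.1 hτσ, hlen, Nat.add_sub_cancel_left])

theorem sum_descendants_monoKer_neg_mul (hq : q ≠ 0) (k n : ℕ) (σ₁ σ₂ : Vertex q) :
    ∑ τ ∈ descendants n σ₂, monoKer (-k) σ₁ τ * monoKer n τ σ₂ = monoKer (-k + n) σ₁ σ₂ := by
  set s : ℝ := (√q)⁻¹
  have hs : ∀ i, (s ^ 2 * q) ^ i = 1 := fun i => by
    rw [inv_pow, Real.sq_sqrt (Nat.cast_nonneg q), inv_mul_cancel₀ (by exact_mod_cast hq), one_pow]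
  have hsum : ∑ τ ∈ descendants n σ₂, monoKer (-k) σ₁ τ * monoKer n τ σ₂ =
      #(descendants n σ₂ ∩ descendants k σ₁) * (s ^ k * s ^ n) := by
    rw [← nsmul_eq_mul, ← sum_const, ← sum_ite_mem]
    refine sum_congr rfl fun τ hτ => ?_
    rw [monoKer_neg_natCast, monoKer_natCast, if_pos hτ, ite_mul, zero_mul]
  rw [hsum]
  rcases le_total k n with hkn | hnk
  · obtain ⟨d, rfl⟩ := Nat.exists_eq_add_of_le hkn
    rw [inter_comm, descendants_inter_of_le hkn, show -(k : ℤ) + ↑(k + d) = d by omega,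
      monoKer_natCast, Nat.add_sub_cancel_left]
    split_ifs
    · rw [card_descendants]
      push_cast
      linear_combination s ^ d * hs k
    · simp
  · obtain ⟨d, rfl⟩ := Nat.exists_eq_add_of_le hnk
    rw [descendants_inter_of_le hnk, show -↑(n + d) + (n : ℤ) = -d by omega,
      monoKer_neg_natCast, Nat.add_sub_cancel_left]
    split_ifs
    · rw [card_descendants]
      push_cast
      linear_combination s ^ d * hs n
    · simp

end

/-- Multiplicativity of branching-Toeplitz kernels with monomial
symbols: for `m ∈ ℤ`, `n ∈ ℕ`, the kernel product (a finitely supported sum) of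
`Γ_q[e^{imθ}]` and `Γ_q[e^{inθ}]` is `Γ_q[e^{i(m+n)θ}]`. -/
theorem monoKer_mul (q : ℕ) (hq : 2 ≤ q) (m : ℤ) (n : ℕ) (σ₁ σ₂ : Vertex q) :
    (Function.support fun τ : Vertex q => monoKer m σ₁ τ * monoKer (n : ℤ) τ σ₂).Finite ∧
    ∑ᶠ τ : Vertex q, monoKer m σ₁ τ * monoKer (n : ℤ) τ σ₂ =
      monoKer (m + n) σ₁ σ₂ := by
  have hsupp : (Function.support fun τ : Vertex q => monoKer m σ₁ τ * monoKer (n : ℤ) τ σ₂) ⊆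
      descendants n σ₂ := fun τ hτ => by
    by_contra h
    rw [mem_coe] at h
    exact hτ (by simp only [monoKer_natCast, if_neg h, mul_zero])
  refine ⟨(descendants n σ₂).finite_toSet.subset hsupp, ?_⟩
  obtain ⟨k, rfl | rfl⟩ := Int.eq_nat_or_neg m
  · exact finsum_monoKer_natCast_mul k n σ₁ σ₂
  · rw [finsum_eq_sum_of_support_subset _ hsupp]
    exact sum_descendants_monoKer_neg_mul (by omega) k n σ₁ σ₂
end

section
/- Let X be an isometry on a Hilbert space H (X*X = Id) and let P ∈ ℂ[z, z̄] be a trigonometric polynomial, P(e^{iθ}) = Σ_{n=-N}^{N} a_n e^{inθ}. Define P(X) := Σ_{n=1}^{N} a_{-n} (X*)^n + a_0 Id + Σ_{n=1}^{N} a_n X^n. Then ‖P(X)‖ ≤ sup_{θ} |P(e^{iθ})|. -/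
/-!
Halmos dilation: for an isometry `X`, the block operator `U = !![X, 1 - X X†; 0, -X†]` on
`H ⊕ H` is unitary and satisfies `U ι = ι X` for the inclusion `ι` of the first summand, so
`ι† U^k ι = X^k` and, taking adjoints, `ι† (U†)^k ι = (X†)^k`. Hence `P(X) = ι† P(U) ι` and
`‖P(X)‖ ≤ ‖P(U)‖`. Since `U` is normal with spectrum in the unit circle, `P(U)` is the continuous
functional calculus of `P` at `U`, whose norm is at most the supremum of `|P|` on the circle.
-/

section TrigPoly

open Finset Complex

variable {A : Type*}

/-- `x ^ n` for `n ≥ 0` and `star x ^ (-n)` for `n < 0`; for `x` unitary this is the integer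
power `x ^ n`. -/
def starZPow [Monoid A] [Star A] (x : A) (n : ℤ) : A :=
  if 0 ≤ n then x ^ n.toNat else star x ^ (-n).toNat

noncomputable def trigPolyEval [Monoid A] [Star A] [AddCommMonoid A] [SMul ℂ A]
    (N : ℕ) (a : ℤ → ℂ) (x : A) : A :=
  ∑ n ∈ Icc (-(N : ℤ)) N, a n • starZPow x n

lemma continuous_starZPow (n : ℤ) : Continuous fun z : ℂ => starZPow z n := by
  unfold starZPow
  split <;> fun_prop

lemma continuous_trigPolyEval (N : ℕ) (a : ℤ → ℂ) : Continuous (trigPolyEval N a : ℂ → ℂ) :=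
  continuous_finsetSum _ fun n _ => (continuous_starZPow n).const_smul (a n)

lemma starZPow_exp_mul_I (θ : ℝ) (n : ℤ) : starZPow (exp (θ * I)) n = exp (n * θ * I) := by
  unfold starZPow
  split_ifs with hn
  · have hcast : ((n.toNat : ℕ) : ℂ) = n := by exact_mod_cast Int.toNat_of_nonneg hn
    rw [← exp_nat_mul, hcast, mul_assoc]
  · have hcast : (((-n).toNat : ℕ) : ℂ) = -n := by
      exact_mod_cast Int.toNat_of_nonneg (Int.neg_nonneg_of_nonpos (le_of_not_ge hn))
    rw [Complex.star_def, ← exp_conj, ← exp_nat_mul, hcast]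
    simp only [map_mul, conj_ofReal, conj_I, mul_neg, neg_mul, neg_neg, mul_assoc]

lemma trigPolyEval_exp_mul_I (N : ℕ) (a : ℤ → ℂ) (θ : ℝ) :
    trigPolyEval N a (exp (θ * I)) = ∑ n ∈ Icc (-(N : ℤ)) N, a n * exp (n * θ * I) := by
  simp only [trigPolyEval, starZPow_exp_mul_I, smul_eq_mul]

lemma bddAbove_range_norm_trigPolyEval_exp_mul_I (N : ℕ) (a : ℤ → ℂ) :
    BddAbove (Set.range fun θ : ℝ => ‖trigPolyEval N a (exp (θ * I))‖) := by
  refine ((isCompact_sphere (0 : ℂ) 1).image (continuous_trigPolyEval N a).norm).bddAbove.mono ?_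
  rintro _ ⟨θ, rfl⟩
  exact ⟨_, by simp [norm_exp_ofReal_mul_I], rfl⟩

lemma norm_trigPolyEval_le_iSup_of_norm_eq_one (N : ℕ) (a : ℤ → ℂ) {z : ℂ} (hz : ‖z‖ = 1) :
    ‖trigPolyEval N a z‖ ≤ ⨆ θ : ℝ, ‖trigPolyEval N a (exp (θ * I))‖ := by
  have hexp : exp (z.arg * I) = z := by simpa [hz] using norm_mul_exp_arg_mul_I z
  exact le_ciSup_of_le (bddAbove_range_norm_trigPolyEval_exp_mul_I N a) z.arg (by rw [hexp])

variable [CStarAlgebra A]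

lemma cfc_starZPow (x : A) [IsStarNormal x] (n : ℤ) :
    cfc (starZPow · n : ℂ → ℂ) x = starZPow x n := by
  unfold starZPow
  split_ifs
  · exact cfc_pow_id x _
  · rw [cfc_pow (star ·) _ x, cfc_star_id x]

lemma cfc_trigPolyEval (N : ℕ) (a : ℤ → ℂ) (x : A) [IsStarNormal x] :
    cfc (trigPolyEval N a : ℂ → ℂ) x = trigPolyEval N a x := by
  have hcont (n : ℤ) : ContinuousOn (fun z : ℂ => a n • starZPow z n) (spectrum ℂ x) :=
    ((continuous_starZPow n).const_smul (a n)).continuousOn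
  have hsum : (trigPolyEval N a : ℂ → ℂ) = ∑ n ∈ Icc (-(N : ℤ)) N, fun z => a n • starZPow z n :=
    funext fun z => by simp only [trigPolyEval, Finset.sum_apply]
  rw [hsum, cfc_sum _ x _ fun n _ => hcont n, trigPolyEval]
  refine Finset.sum_congr rfl fun n _ => ?_
  rw [cfc_smul _ _ x (continuous_starZPow n).continuousOn, cfc_starZPow]

lemma norm_trigPolyEval_le_of_mem_unitary (N : ℕ) (a : ℤ → ℂ) {u : A} (hu : u ∈ unitary A) :
    ‖trigPolyEval N a u‖ ≤ ⨆ θ : ℝ, ‖trigPolyEval N a (exp (θ * I))‖ := by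
  have := isStarNormal_of_mem_unitary hu
  rw [← cfc_trigPolyEval]
  exact norm_cfc_le (Real.iSup_nonneg fun _ => norm_nonneg _) fun z hz =>
    norm_trigPolyEval_le_iSup_of_norm_eq_one N a (spectrum.norm_eq_one_of_unitary hu hz)

end TrigPoly

lemma WithLp.prod_ext {α β : Type*} {p : ENNReal} {v w : WithLp p (α × β)}
    (h₁ : v.fst = w.fst) (h₂ : v.snd = w.snd) : v = w :=
  WithLp.ofLp_injective p (Prod.ext h₁ h₂)

open ContinuousLinearMap

section BlockOperator

variable {E F : Type*} [NormedAddCommGroup E] [InnerProductSpace ℂ E]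
  [NormedAddCommGroup F] [InnerProductSpace ℂ F]

/-- The operator with block matrix `!![A, B; C, D]` on `E ⊕ F`. -/
noncomputable def blockOp (A : E →L[ℂ] E) (B : F →L[ℂ] E) (C : E →L[ℂ] F) (D : F →L[ℂ] F) :
    WithLp 2 (E × F) →L[ℂ] WithLp 2 (E × F) :=
  (WithLp.prodContinuousLinearEquiv 2 ℂ E F).symm.toContinuousLinearMap ∘L
    (A ∘L WithLp.fstL 2 ℂ E F + B ∘L WithLp.sndL 2 ℂ E F).prod
      (C ∘L WithLp.fstL 2 ℂ E F + D ∘L WithLp.sndL 2 ℂ E F)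

noncomputable def inlL2 : E →L[ℂ] WithLp 2 (E × F) :=
  (WithLp.prodContinuousLinearEquiv 2 ℂ E F).symm.toContinuousLinearMap ∘L inl ℂ E F

variable {A A' : E →L[ℂ] E} {B B' : F →L[ℂ] E} {C C' : E →L[ℂ] F} {D D' : F →L[ℂ] F}

@[simp] lemma blockOp_apply_fst (v : WithLp 2 (E × F)) :
    (blockOp A B C D v).fst = A v.fst + B v.snd := rfl

@[simp] lemma blockOp_apply_snd (v : WithLp 2 (E × F)) :
    (blockOp A B C D v).snd = C v.fst + D v.snd := rfl

@[simp] lemma inlL2_apply_fst (x : E) : (inlL2 x : WithLp 2 (E × F)).fst = x := rfl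

@[simp] lemma inlL2_apply_snd (x : E) : (inlL2 x : WithLp 2 (E × F)).snd = 0 := rfl

lemma blockOp_comp_blockOp :
    blockOp A B C D ∘L blockOp A' B' C' D' =
      blockOp (A ∘L A' + B ∘L C') (A ∘L B' + B ∘L D') (C ∘L A' + D ∘L C')
        (C ∘L B' + D ∘L D') := by
  ext1 v
  refine WithLp.prod_ext ?_ ?_ <;> simp <;> abel

lemma blockOp_one : blockOp (1 : E →L[ℂ] E) 0 0 (1 : F →L[ℂ] F) = 1 := by
  ext1 v
  exact WithLp.prod_ext (by simp) (by simp)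

lemma blockOp_comp_inlL2 : blockOp A B 0 D ∘L inlL2 = inlL2 ∘L A := by
  ext1 x
  exact WithLp.prod_ext (by simp) (by simp)

variable [CompleteSpace E] [CompleteSpace F]

lemma adjoint_blockOp :
    adjoint (blockOp A B C D) = blockOp (adjoint A) (adjoint C) (adjoint B) (adjoint D) := by
  refine ((eq_adjoint_iff _ _).mpr fun v w => ?_).symm
  simp [inner_add_left, inner_add_right, adjoint_inner_left]
  ring

lemma adjoint_inlL2_comp_inlL2 : adjoint (inlL2 : E →L[ℂ] WithLp 2 (E × F)) ∘L inlL2 = 1 := by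
  ext1 x
  refine ext_inner_right ℂ fun y => ?_
  simp [adjoint_inner_left]

end BlockOperator

section HalmosDilation

variable {H : Type*} [NormedAddCommGroup H] [InnerProductSpace ℂ H] [CompleteSpace H]

noncomputable def halmosDilation (X : H →L[ℂ] H) : WithLp 2 (H × H) →L[ℂ] WithLp 2 (H × H) :=
  blockOp X (1 - X ∘L adjoint X) 0 (-adjoint X)

lemma halmosDilation_mem_unitary {X : H →L[ℂ] H} (hX : adjoint X ∘L X = 1) :
    halmosDilation X ∈ unitary (WithLp 2 (H × H) →L[ℂ] WithLp 2 (H × H)) := by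
  have hX' (Y : H →L[ℂ] H) : adjoint X ∘L X ∘L Y = Y := by
    rw [← comp_assoc, hX, one_def, id_comp]
  have hD : adjoint (1 - X ∘L adjoint X) = 1 - X ∘L adjoint X := by
    simp [adjoint_comp, adjoint_one]
  rw [Unitary.mem_iff, star_eq_adjoint, mul_def, mul_def, halmosDilation, adjoint_blockOp, hD,
    blockOp_comp_blockOp, blockOp_comp_blockOp]
  constructor <;>
    convert blockOp_one using 2 <;> simp [comp_sub, sub_comp, comp_assoc, hX, hX', one_def]

end HalmosDilation

section Compression

variable {E F : Type*} [NormedAddCommGroup E] [InnerProductSpace ℂ E]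
  [NormedAddCommGroup F] [InnerProductSpace ℂ F] {V : E →L[ℂ] F} {T : E →L[ℂ] E} {U : F →L[ℂ] F}

lemma pow_comp_of_comp_eq (h : U ∘L V = V ∘L T) (k : ℕ) : (U ^ k) ∘L V = V ∘L T ^ k := by
  induction k with
  | zero => simp [one_def]
  | succ k ih =>
    rw [pow_succ, pow_succ, mul_def, mul_def, comp_assoc, h, ← comp_assoc, ih, comp_assoc]

variable [CompleteSpace E] [CompleteSpace F]

lemma norm_le_one_of_adjoint_comp_self_eq_one (hV : adjoint V ∘L V = 1) : ‖V‖ ≤ 1 := by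
  have h := norm_adjoint_comp_self V
  rw [hV] at h
  have h1 : ‖(1 : E →L[ℂ] E)‖ ≤ 1 := norm_id_le
  nlinarith [norm_nonneg V]

lemma adjoint_comp_pow_comp (hV : adjoint V ∘L V = 1) (h : U ∘L V = V ∘L T) (k : ℕ) :
    adjoint V ∘L (U ^ k) ∘L V = T ^ k := by
  rw [pow_comp_of_comp_eq h, ← comp_assoc, hV, one_def, id_comp]

lemma adjoint_comp_starZPow_comp (hV : adjoint V ∘L V = 1) (h : U ∘L V = V ∘L T) (n : ℤ) :
    adjoint V ∘L starZPow U n ∘L V = starZPow T n := by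
  unfold starZPow
  split_ifs
  · exact adjoint_comp_pow_comp hV h _
  · rw [← star_pow, ← star_pow, star_eq_adjoint, star_eq_adjoint, ← adjoint_comp_pow_comp hV h,
      adjoint_comp, adjoint_comp, adjoint_adjoint, comp_assoc]

lemma adjoint_comp_trigPolyEval_comp (hV : adjoint V ∘L V = 1) (h : U ∘L V = V ∘L T)
    (N : ℕ) (a : ℤ → ℂ) : adjoint V ∘L trigPolyEval N a U ∘L V = trigPolyEval N a T := by
  simp only [trigPolyEval, finsetSum_comp, comp_finsetSum, smul_comp, comp_smul,
    adjoint_comp_starZPow_comp hV h]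

lemma norm_trigPolyEval_le_of_comp_eq (hV : adjoint V ∘L V = 1) (h : U ∘L V = V ∘L T)
    (N : ℕ) (a : ℤ → ℂ) : ‖trigPolyEval N a T‖ ≤ ‖trigPolyEval N a U‖ := by
  have hV1 := norm_le_one_of_adjoint_comp_self_eq_one hV
  rw [← adjoint_comp_trigPolyEval_comp hV h]
  calc ‖adjoint V ∘L trigPolyEval N a U ∘L V‖
      ≤ ‖adjoint V‖ * (‖trigPolyEval N a U‖ * ‖V‖) :=
        (opNorm_comp_le _ _).trans (by gcongr; exact opNorm_comp_le _ _)
    _ ≤ 1 * (‖trigPolyEval N a U‖ * 1) := by rw [LinearIsometryEquiv.norm_map]; gcongr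
    _ = ‖trigPolyEval N a U‖ := by ring

end Compression

open ContinuousLinearMap in
/-- Let `X` be an isometry on a Hilbert space `H`
(`X*X = Id`) and `P(e^{iθ}) = Σ_{|n| ≤ N} a_n e^{inθ}` a trigonometric
polynomial.  With `P(X) := Σ_{n=1}^N a_{-n} (X*)^n + a_0·Id + Σ_{n=1}^N a_n X^n`,
one has `‖P(X)‖ ≤ sup_θ |P(e^{iθ})|`. -/
theorem trig_poly_isometry_norm_bound
    (H : Type*) [NormedAddCommGroup H] [InnerProductSpace ℂ H] [CompleteSpace H]
    (X : H →L[ℂ] H) (hX : (adjoint X).comp X = 1) (N : ℕ) (a : ℤ → ℂ) :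
    ‖∑ n ∈ Finset.Icc (-(N : ℤ)) (N : ℤ),
        a n • (if 0 ≤ n then X ^ n.toNat else (adjoint X) ^ (-n).toNat)‖ ≤
      ⨆ θ : ℝ, ‖∑ n ∈ Finset.Icc (-(N : ℤ)) (N : ℤ),
        a n * Complex.exp ((n : ℂ) * (θ : ℂ) * Complex.I)‖ := by
  calc ‖trigPolyEval N a X‖
      ≤ ‖trigPolyEval N a (halmosDilation X)‖ :=
        norm_trigPolyEval_le_of_comp_eq adjoint_inlL2_comp_inlL2 blockOp_comp_inlL2 N a
    _ ≤ ⨆ θ : ℝ, ‖trigPolyEval N a (Complex.exp (θ * Complex.I))‖ :=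
        norm_trigPolyEval_le_of_mem_unitary N a (halmosDilation_mem_unitary hX)
    _ = _ := by simp only [trigPolyEval_exp_mul_I]
end

section
/- For any formal Fourier series f on the free semigroup F_q^+ and any unit vector a ∈ ℂ^q, the kernel composition identity Γ_a[f] Γ_a[e^{iθ}] = Γ_a[e^{iθ} f] holds, where (Γ_a[f] Γ_a[e^{iθ}])(u, v) := Σ_{w ∈ F_q^+} Γ_a[f](u, w) Γ_a[e^{iθ}](w, v) (a finite sum for each (u,v)), and e^{iθ}f has Fourier coefficients \hat{(e^{iθ}f)}(n) = \hat{f}(n-1). -/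
def wprod {q : ℕ} (a : Fin q → ℂ) (w : List (Fin q)) : ℂ := (w.map a).prod

def freeKer {q : ℕ} (a : Fin q → ℂ) (f : ℤ → ℂ) (u v : List (Fin q)) : ℂ :=
  if v <:+ u then
    f ((u.length : ℤ) - v.length) * wprod a (u.take (u.length - v.length))
  else if u <:+ v then
    f ((u.length : ℤ) - v.length) * starRingEnd ℂ (wprod a (v.take (v.length - u.length)))
  else 0

/-!
Composing with `Γ_a[e^{iθ}]` on the right only sees the words `w = s_i v`, so the composition
at `(u, v)` is `∑_i Γ_a[f](u, s_i v) a_i`. If `v` is a proper suffix of `u`, say `u = d s_j v`, only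
`i = j` contributes and gives `f̂(|d|) [d s_j](a)`. If `u` is a suffix of `v = w u`, every `i`
contributes `f̂(-|w|-1) conj(a_i [w](a)) a_i`, and these sum to `f̂(-|w|-1) conj([w](a))` because
`∑ |a_i|² = 1`. Otherwise all terms vanish.
-/

section FreeKer

variable {q : ℕ} (a : Fin q → ℂ) (f : ℤ → ℂ)

lemma wprod_append (x y : List (Fin q)) : wprod a (x ++ y) = wprod a x * wprod a y := by
  simp [wprod]

lemma wprod_singleton (i : Fin q) : wprod a [i] = a i := by
  simp [wprod]

lemma freeKer_append_left (w v : List (Fin q)) :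
    freeKer a f (w ++ v) v = f w.length * wprod a w := by
  rw [freeKer, if_pos (List.suffix_append w v)]
  simp

lemma freeKer_append_right (w u : List (Fin q)) :
    freeKer a f u (w ++ u) = f (-w.length) * starRingEnd ℂ (wprod a w) := by
  by_cases hw : w = []
  · simp [hw, freeKer, wprod]
  have hlong : ¬ (w ++ u) <:+ u := fun h =>
    hw (List.length_eq_zero_iff.mp (by simpa using h.length_le))
  have hlen : (w ++ u).length - u.length = w.length := by simp
  rw [freeKer, if_neg hlong, if_pos (List.suffix_append w u), hlen, List.take_left]
  congr 2
  simp only [List.length_append, Nat.cast_add]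
  ring

lemma freeKer_eq_zero_of_not_suffix {u v : List (Fin q)} (hvu : ¬ v <:+ u) (huv : ¬ u <:+ v) :
    freeKer a f u v = 0 := by
  rw [freeKer, if_neg hvu, if_neg huv]

/-- `i :: v` and `j :: v` have the same length, so they cannot both be comparable with `u` in the
suffix order. -/
lemma freeKer_cons_eq_zero_of_suffix {u v : List (Fin q)} {i j : Fin q} (hj : (j :: v) <:+ u)
    (hij : i ≠ j) : freeKer a f u (i :: v) = 0 := by
  have hne {x y : Fin q} (hxy : x ≠ y) : ¬ (x :: v) <:+ (y :: v) := fun h =>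
    hxy (List.cons.inj (h.eq_of_length rfl)).1
  exact freeKer_eq_zero_of_not_suffix a f
    (fun h => hne hij (List.suffix_of_suffix_length_le h hj le_rfl))
    (fun h => hne hij.symm (hj.trans h))

end FreeKer

section Shift

variable {q : ℕ} (a : Fin q → ℂ)

lemma freeKer_shift_cons (i : Fin q) (v : List (Fin q)) :
    freeKer a (fun k => if k = 1 then 1 else 0) (i :: v) v = a i := by
  simpa [wprod_singleton] using
    freeKer_append_left a (fun k : ℤ => if k = 1 then (1 : ℂ) else 0) [i] v

lemma freeKer_shift_eq_zero {w v : List (Fin q)} (hw : ∀ i, w ≠ i :: v) :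
    freeKer a (fun k => if k = 1 then 1 else 0) w v = 0 := by
  by_cases hvw : v <:+ w
  · obtain ⟨t, rfl⟩ := hvw
    have ht : t.length ≠ 1 := fun ht => by
      obtain ⟨i, rfl⟩ := List.length_eq_one_iff.mp ht
      exact hw i rfl
    simp [freeKer_append_left, ht]
  by_cases hwv : w <:+ v
  · obtain ⟨t, rfl⟩ := hwv
    have ht : -(t.length : ℤ) ≠ 1 := by omega
    simp [freeKer_append_right, ht]
  exact freeKer_eq_zero_of_not_suffix _ _ hvw hwv

lemma support_freeKer_mul_shift_subset (g : ℤ → ℂ) (u v : List (Fin q)) :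
    (Function.support fun w => freeKer a g u w * freeKer a (fun k => if k = 1 then 1 else 0) w v) ⊆
      (Finset.univ.image (· :: v) : Finset (List (Fin q))) := by
  intro w hw
  by_contra hnot
  exact hw (by dsimp only; rw [freeKer_shift_eq_zero a (fun i h => hnot (by simp [h])), mul_zero])

lemma finsum_freeKer_mul_shift (g : ℤ → ℂ) (u v : List (Fin q)) :
    ∑ᶠ w, freeKer a g u w * freeKer a (fun k => if k = 1 then 1 else 0) w v =
      ∑ i, freeKer a g u (i :: v) * a i := by
  rw [finsum_eq_sum_of_support_subset _ (support_freeKer_mul_shift_subset a g u v),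
    Finset.sum_image fun i _ j _ h => (List.cons.inj h).1]
  simp only [freeKer_shift_cons]

end Shift

section Composition

variable {q : ℕ} (a : Fin q → ℂ) (f : ℤ → ℂ)

lemma sum_freeKer_cons_mul_of_append_cons (d : List (Fin q)) (j : Fin q) (v : List (Fin q)) :
    ∑ i, freeKer a f (d ++ j :: v) (i :: v) * a i =
      freeKer a (fun n => f (n - 1)) (d ++ j :: v) v := by
  rw [Fintype.sum_eq_single j fun i hi => by
      rw [freeKer_cons_eq_zero_of_suffix a f (List.suffix_append d _) hi, zero_mul],
    freeKer_append_left, List.append_cons, freeKer_append_left, wprod_append, wprod_singleton]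
  simp [mul_assoc]

lemma sum_freeKer_cons_mul_of_suffix (ha : ∑ k, ‖a k‖ ^ 2 = 1) (w u : List (Fin q)) :
    ∑ i, freeKer a f u (i :: (w ++ u)) * a i =
      freeKer a (fun n => f (n - 1)) u (w ++ u) := by
  have hnorm : ∑ i, starRingEnd ℂ (a i) * a i = 1 := by
    simp_rw [Complex.conj_mul']
    exact_mod_cast ha
  calc ∑ i, freeKer a f u (i :: (w ++ u)) * a i
      = f (-w.length - 1) * starRingEnd ℂ (wprod a w) * ∑ i, starRingEnd ℂ (a i) * a i := by
        rw [Finset.mul_sum]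
        refine Finset.sum_congr rfl fun i _ => ?_
        rw [← List.cons_append, freeKer_append_right]
        simp only [wprod, List.map_cons, List.prod_cons, map_mul, List.length_cons]
        push_cast
        rw [neg_add']
        ring
    _ = freeKer a (fun n => f (n - 1)) u (w ++ u) := by
        rw [hnorm, mul_one, freeKer_append_right]

lemma sum_freeKer_cons_mul_of_not_suffix {u v : List (Fin q)} (hvu : ¬ v <:+ u)
    (huv : ¬ u <:+ v) :
    ∑ i, freeKer a f u (i :: v) * a i = freeKer a (fun n => f (n - 1)) u v := by
  have hzero (i : Fin q) : freeKer a f u (i :: v) = 0 := by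
    refine freeKer_eq_zero_of_not_suffix a f (fun h => hvu ((List.suffix_cons i v).trans h)) ?_
    rw [List.suffix_cons_iff]
    rintro (rfl | h)
    exacts [hvu (List.suffix_cons i v), huv h]
  simp [hzero, freeKer_eq_zero_of_not_suffix a _ hvu huv]

lemma sum_freeKer_cons_mul (ha : ∑ k, ‖a k‖ ^ 2 = 1) (u v : List (Fin q)) :
    ∑ i, freeKer a f u (i :: v) * a i = freeKer a (fun n => f (n - 1)) u v := by
  by_cases hvu : v <:+ u
  · obtain ⟨w, rfl⟩ := hvu
    rcases w.eq_nil_or_concat' with rfl | ⟨d, j, rfl⟩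
    · simpa using sum_freeKer_cons_mul_of_suffix a f ha [] v
    · simpa using sum_freeKer_cons_mul_of_append_cons a f d j v
  by_cases huv : u <:+ v
  · obtain ⟨w, rfl⟩ := huv
    exact sum_freeKer_cons_mul_of_suffix a f ha w u
  exact sum_freeKer_cons_mul_of_not_suffix a f hvu huv

end Composition

theorem freeKer_comp_shift_general (q : ℕ) (a : Fin q → ℂ)
    (ha : ∑ k, ‖a k‖ ^ 2 = 1) (f : ℤ → ℂ) (u v : List (Fin q)) :
    (Function.support fun w : List (Fin q) =>
      freeKer a f u w * freeKer a (fun k => if k = 1 then 1 else 0) w v).Finite ∧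
    ∑ᶠ w : List (Fin q),
        freeKer a f u w * freeKer a (fun k => if k = 1 then 1 else 0) w v =
      freeKer a (fun n => f (n - 1)) u v :=
  ⟨(Finset.finite_toSet _).subset (support_freeKer_mul_shift_subset a f u v),
    (finsum_freeKer_mul_shift a f u v).trans (sum_freeKer_cons_mul a f ha u v)⟩

/-- For any formal Fourier series `f` and unit vector
`a ∈ ℂ^q`, one has the kernel composition identity
`Γ_a[f] Γ_a[e^{iθ}] = Γ_a[e^{iθ} f]`, where the composition at `(u,v)` is the
(finitely supported) sum over all words `w`, and `e^{iθ}f` has coefficients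
`\hat{f}(· - 1)`. -/
theorem freeKer_comp_shift (q : ℕ) (hq : 2 ≤ q) (a : Fin q → ℂ)
    (ha : ∑ k, ‖a k‖ ^ 2 = 1) (f : ℤ → ℂ) (u v : List (Fin q)) :
    (Function.support fun w : List (Fin q) =>
      freeKer a f u w * freeKer a (fun k => if k = 1 then 1 else 0) w v).Finite ∧
    ∑ᶠ w : List (Fin q),
        freeKer a f u w * freeKer a (fun k => if k = 1 then 1 else 0) w v =
      freeKer a (fun n => f (n - 1)) u v :=
  freeKer_comp_shift_general q a ha f u v
end
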